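/- Let I ⊆ R = K[t,x] be a d-dimensional primary ideal with independent variables t and dependent variables x, and S = K(t)[x]. If {D_i} ⊆ W_S is a set of Noetherian operators for the zero-dimensional ideal IS (i.e. for g ∈ S: g ∈ IS iff D_i • g ∈ √(IS) for all i), then any lifts N_i = u_i D_i ∈ W_R (clearing denominators by units u_i ∈ K[t]\{0}) form a set of Noetherian operators for I: for f ∈ R, f ∈ I iff N_i • f ∈ √I for all i. -/

import Mathlib

open MvPolynomial

/-- The differential operator `∂_x^α` on `A[x₁,…,x_m]` (derivatives in the `x`-variables
only; coefficients in `A` are treated as scalars). -/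
noncomputable def diffOp {A : Type*} [CommRing A] {m : ℕ} (α : Fin m →₀ ℕ) :
    Module.End A (MvPolynomial (Fin m) A) :=
  (List.ofFn (fun i : Fin m => ((pderiv i : Derivation A (MvPolynomial (Fin m) A)
      (MvPolynomial (Fin m) A)).toLinearMap ^ (α i)))).prod

/-- The action `N • f = ∑ c_α (∂_x^α • f)` of a differential operator
`N = ∑ c_α ∂_x^α` with polynomial coefficients (represented as a finitely supported
function from `∂`-monomials to the coefficient polynomial ring). -/
noncomputable def wAct {A : Type*} [CommRing A] {m : ℕ}
    (N : (Fin m →₀ ℕ) →₀ MvPolynomial (Fin m) A) (f : MvPolynomial (Fin m) A) :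
    MvPolynomial (Fin m) A :=
  N.sum fun α c => c * diffOp α f

/-!
Extending scalars from `A = K[t]` to its fraction field `F = K(t)` commutes with the
`x`-derivatives, so `N_i • f` maps to `u_i (D_i • f)` in `S = F[x]`, where `u_i` is a unit.
It remains to see that `I` and `√I` are the contractions of `IS` and `√(IS)`: `S` is the
localization of `R` at the nonzero constants, none of which lies in `I` (the variables `t`
are independent modulo `I`), and contraction from a localization recovers primary ideals
avoiding the localizing set.
-/

section DiffOp

variable {A B : Type*} [CommRing A] [CommRing B] {m : ℕ}

lemma map_pderiv_pow_apply (φ : A →+* B) (i : Fin m) (k : ℕ) (f : MvPolynomial (Fin m) A) :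
    map φ (((pderiv i : Derivation A (MvPolynomial (Fin m) A)
        (MvPolynomial (Fin m) A)).toLinearMap ^ k) f)
      = ((pderiv i : Derivation B (MvPolynomial (Fin m) B)
        (MvPolynomial (Fin m) B)).toLinearMap ^ k) (map φ f) := by
  simp only [Module.End.pow_apply]
  exact (Function.Semiconj.iterate_right (fun g => (pderiv_map (i := i)).symm) k f)

lemma map_diffOp_apply (φ : A →+* B) (α : Fin m →₀ ℕ) (f : MvPolynomial (Fin m) A) :
    map φ (diffOp α f) = diffOp α (map φ f) := by
  unfold diffOp
  rw [List.ofFn_eq_map, List.ofFn_eq_map]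
  induction List.finRange m generalizing f with
  | nil => simp
  | cons i L ih =>
    simp only [List.map_cons, List.prod_cons, Module.End.mul_apply]
    rw [map_pderiv_pow_apply, ih]

lemma map_wAct (φ : A →+* B) (N : (Fin m →₀ ℕ) →₀ MvPolynomial (Fin m) A)
    (f : MvPolynomial (Fin m) A) :
    map φ (wAct N f) = wAct (N.mapRange (map φ) (map_zero _)) (map φ f) := by
  rw [wAct, wAct, Finsupp.sum_mapRange_index (fun _ => zero_mul _), Finsupp.sum, map_sum]
  simp only [map_mul, map_diffOp_apply]
  rfl

lemma wAct_smul (c : MvPolynomial (Fin m) A) (N : (Fin m →₀ ℕ) →₀ MvPolynomial (Fin m) A)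
    (f : MvPolynomial (Fin m) A) :
    wAct (c • N) f = c * wAct N f := by
  rw [wAct, wAct, Finsupp.sum_smul_index (fun _ => zero_mul _), Finsupp.sum, Finsupp.sum,
    Finset.mul_sum]
  simp only [mul_assoc]

end DiffOp

section Contraction

variable {σ R : Type*} [CommRing R] (M : Submonoid R) (S : Type*) [CommRing S] [Algebra R S]
  [IsLocalization M S]

theorem MvPolynomial.comap_map_map_of_isPrimary {I : Ideal (MvPolynomial σ R)}
    (hI : I.IsPrimary) (hM : ∀ a ∈ M, C a ∉ I) :
    (I.map (map (algebraMap R S))).comap (map (algebraMap R S)) = I := by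
  let := algebraMvPolynomial (σ := σ) (R := R) (S := S)
  refine IsLocalization.under_map_of_isPrimary_disjoint (M.map C) (MvPolynomial σ S) hI ?_
  exact Set.disjoint_left.mpr fun _ ⟨a, ha, hCa⟩ => hCa ▸ hM a ha

theorem MvPolynomial.map_mem_map_map_iff_of_isPrimary {I : Ideal (MvPolynomial σ R)}
    (hI : I.IsPrimary) (hM : ∀ a ∈ M, C a ∉ I) (f : MvPolynomial σ R) :
    map (algebraMap R S) f ∈ I.map (map (algebraMap R S)) ↔ f ∈ I := by
  rw [← Ideal.mem_comap, comap_map_map_of_isPrimary M S hI hM]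

theorem MvPolynomial.map_mem_radical_map_map_iff_of_isPrimary {I : Ideal (MvPolynomial σ R)}
    (hI : I.IsPrimary) (hM : ∀ a ∈ M, C a ∉ I) (f : MvPolynomial σ R) :
    map (algebraMap R S) f ∈ (I.map (map (algebraMap R S))).radical ↔ f ∈ I.radical := by
  rw [← Ideal.mem_comap, Ideal.comap_radical, comap_map_map_of_isPrimary M S hI hM]

theorem mem_iff_forall_wAct_mem_radical_of_isLocalization {m : ℕ}
    {I : Ideal (MvPolynomial (Fin m) R)} (hI : I.IsPrimary) (hM : ∀ a ∈ M, C a ∉ I)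
    {ι : Type*} (D : ι → (Fin m →₀ ℕ) →₀ MvPolynomial (Fin m) S)
    (hD : ∀ g, g ∈ I.map (map (algebraMap R S)) ↔
      ∀ i, wAct (D i) g ∈ (I.map (map (algebraMap R S))).radical)
    (u : ι → R) (hu : ∀ i, u i ∈ M) (N : ι → (Fin m →₀ ℕ) →₀ MvPolynomial (Fin m) R)
    (hN : ∀ i α, map (algebraMap R S) (N i α) = C (algebraMap R S (u i)) * D i α)
    (f : MvPolynomial (Fin m) R) :
    f ∈ I ↔ ∀ i, wAct (N i) f ∈ I.radical := by
  have hlift : ∀ i, (N i).mapRange (map (algebraMap R S)) (map_zero _) =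
      (C (algebraMap R S (u i)) : MvPolynomial (Fin m) S) • D i := fun i =>
    Finsupp.ext (hN i)
  rw [← map_mem_map_map_iff_of_isPrimary M S hI hM, hD]
  refine forall_congr' fun i => ?_
  rw [← map_mem_radical_map_map_iff_of_isPrimary M S hI hM, map_wAct, hlift,
    wAct_smul, Ideal.unit_mul_mem_iff_mem _ ((IsLocalization.map_units S ⟨u i, hu i⟩).map C)]

end Contraction

theorem lift_noetherian_operators_general
    (K : Type*) [Field K] (d m : ℕ)
    (I : Ideal (MvPolynomial (Fin m) (MvPolynomial (Fin d) K)))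
    (hprim : I.IsPrimary)
    (hinj : ∀ c : MvPolynomial (Fin d) K, MvPolynomial.C c ∈ I → c = 0)
    {ι : Type*}
    (D : ι → ((Fin m →₀ ℕ) →₀ MvPolynomial (Fin m) (FractionRing (MvPolynomial (Fin d) K))))
    (hD : ∀ g : MvPolynomial (Fin m) (FractionRing (MvPolynomial (Fin d) K)),
      g ∈ I.map (MvPolynomial.map
        (algebraMap (MvPolynomial (Fin d) K) (FractionRing (MvPolynomial (Fin d) K)))) ↔
      ∀ i, wAct (D i) g ∈ (I.map (MvPolynomial.map
        (algebraMap (MvPolynomial (Fin d) K)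
          (FractionRing (MvPolynomial (Fin d) K))))).radical)
    (u : ι → MvPolynomial (Fin d) K) (hu : ∀ i, u i ≠ 0)
    (N : ι → ((Fin m →₀ ℕ) →₀ MvPolynomial (Fin m) (MvPolynomial (Fin d) K)))
    (hN : ∀ i α, MvPolynomial.map
        (algebraMap (MvPolynomial (Fin d) K) (FractionRing (MvPolynomial (Fin d) K)))
        ((N i) α) =
      MvPolynomial.C (algebraMap (MvPolynomial (Fin d) K)
        (FractionRing (MvPolynomial (Fin d) K)) (u i)) * (D i) α) :
    ∀ f : MvPolynomial (Fin m) (MvPolynomial (Fin d) K),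
      f ∈ I ↔ ∀ i, wAct (N i) f ∈ I.radical := fun f =>
  mem_iff_forall_wAct_mem_radical_of_isLocalization (nonZeroDivisors _) _ hprim
    (fun a ha hCa => nonZeroDivisors.ne_zero ha (hinj a hCa)) D hD u
    (fun i => mem_nonZeroDivisors_of_ne_zero (hu i)) N hN f

/-- Let `I ⊆ R = K[t,x]` be a `d`-dimensional primary ideal with independent
variables `t` and dependent variables `x`, and `S = K(t)[x]`. If `{D_i} ⊆ W_S` is a set of
Noetherian operators for the zero-dimensional ideal `IS`, then any lifts
`N_i = u_i D_i ∈ W_R` obtained by clearing denominators by `u_i ∈ K[t] \ {0}` form a set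
of Noetherian operators for `I`: for `f ∈ R`, `f ∈ I ⟺ ∀ i, N_i • f ∈ √I`. -/
theorem lift_noetherian_operators
    (K : Type*) [Field K] [CharZero K] (d m : ℕ)
    (I : Ideal (MvPolynomial (Fin m) (MvPolynomial (Fin d) K)))
    (hprim : I.IsPrimary)
    (hinj : ∀ c : MvPolynomial (Fin d) K, MvPolynomial.C c ∈ I → c = 0)
    (halg : ∀ j : Fin m, ∃ q : Polynomial (MvPolynomial (Fin d) K),
      q ≠ 0 ∧ Polynomial.eval₂ MvPolynomial.C (MvPolynomial.X j) q ∈ I)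
    {ι : Type*}
    (D : ι → ((Fin m →₀ ℕ) →₀ MvPolynomial (Fin m) (FractionRing (MvPolynomial (Fin d) K))))
    (hD : ∀ g : MvPolynomial (Fin m) (FractionRing (MvPolynomial (Fin d) K)),
      g ∈ I.map (MvPolynomial.map
        (algebraMap (MvPolynomial (Fin d) K) (FractionRing (MvPolynomial (Fin d) K)))) ↔
      ∀ i, wAct (D i) g ∈ (I.map (MvPolynomial.map
        (algebraMap (MvPolynomial (Fin d) K)
          (FractionRing (MvPolynomial (Fin d) K))))).radical)
    (u : ι → MvPolynomial (Fin d) K) (hu : ∀ i, u i ≠ 0)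
    (N : ι → ((Fin m →₀ ℕ) →₀ MvPolynomial (Fin m) (MvPolynomial (Fin d) K)))
    (hN : ∀ i α, MvPolynomial.map
        (algebraMap (MvPolynomial (Fin d) K) (FractionRing (MvPolynomial (Fin d) K)))
        ((N i) α) =
      MvPolynomial.C (algebraMap (MvPolynomial (Fin d) K)
        (FractionRing (MvPolynomial (Fin d) K)) (u i)) * (D i) α) :
    ∀ f : MvPolynomial (Fin m) (MvPolynomial (Fin d) K),
      f ∈ I ↔ ∀ i, wAct (N i) f ∈ I.radical :=
  lift_noetherian_operators_general K d m I hprim hinj D hD u hu N hN
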